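/- arXiv:2410.22577 — 8 statements merged into one kernel-verified Lean document; each statement's English description precedes it below -/
import Mathlib

section
/- Let L be a graph Laplacian, K a positive diagonal matrix, s ∈ R^n, and z* = (L+K)^{-1} K s. Define the mean-centered vector z̄ = z* - ((z*)^T 1 / n)·1 and s̄_K = s - ((s^T 1_K)/n)·1 where 1_K = K(L+K)^{-1} 1. Then z̄ = (L+K)^{-1} K s̄_K. -/
open Matrix

theorem stmt1 {n : ℕ} (hn : 0 < n) (L K : Matrix (Fin n) (Fin n) ℝ)
    (hL : L.PosSemidef) (hL1 : L *ᵥ 1 = 0)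
    (k : Fin n → ℝ) (hK : K = Matrix.diagonal k) (hk : ∀ i, 0 < k i)
    (s : Fin n → ℝ) :
    let z := ((L + K)⁻¹ * K) *ᵥ s
    let oneK := (K * (L + K)⁻¹) *ᵥ (1 : Fin n → ℝ)
    let sK := s - ((s ⬝ᵥ oneK) / (n : ℝ)) • (1 : Fin n → ℝ)
    z - ((z ⬝ᵥ (1 : Fin n → ℝ)) / (n : ℝ)) • (1 : Fin n → ℝ) = ((L + K)⁻¹ * K) *ᵥ sK := by
  intro z oneK sK
  have hKsym : Kᵀ = K := by rw [hK, Matrix.diagonal_transpose]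
  have hLsym : Lᵀ = L := hL.isHermitian.eq
  have hKpd : K.PosDef := by
    rw [hK]
    exact Matrix.PosDef.diagonal hk
  have hPD : (L + K).PosDef := by rw [add_comm]; exact hKpd.add_posSemidef hL
  have hdet : (L + K).det ≠ 0 := hPD.det_pos.ne'
  have hinv : (L + K)⁻¹ * (L + K) = 1 := Matrix.nonsing_inv_mul _ hdet.isUnit
  have hsum : (L + K) *ᵥ (1 : Fin n → ℝ) = K *ᵥ 1 := by
    rw [Matrix.add_mulVec, hL1, zero_add]
  have hA1 : ((L + K)⁻¹ * K) *ᵥ (1 : Fin n → ℝ) = 1 := by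
    rw [← Matrix.mulVec_mulVec, ← hsum, Matrix.mulVec_mulVec, hinv, Matrix.one_mulVec]
  have hT : ((L + K)⁻¹ * K)ᵀ = K * (L + K)⁻¹ := by
    rw [Matrix.transpose_mul, hKsym, Matrix.transpose_nonsing_inv, Matrix.transpose_add,
      hLsym, hKsym]
  have hdot : z ⬝ᵥ (1 : Fin n → ℝ) = s ⬝ᵥ oneK := by
    show (((L + K)⁻¹ * K) *ᵥ s) ⬝ᵥ (1 : Fin n → ℝ) = s ⬝ᵥ oneK
    rw [dotProduct_comm, Matrix.dotProduct_mulVec, ← Matrix.mulVec_transpose, hT, dotProduct_comm]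
  show z - ((z ⬝ᵥ (1 : Fin n → ℝ)) / (n : ℝ)) • (1 : Fin n → ℝ)
      = ((L + K)⁻¹ * K) *ᵥ (s - ((s ⬝ᵥ oneK) / (n : ℝ)) • (1 : Fin n → ℝ))
  rw [Matrix.mulVec_sub, Matrix.mulVec_smul, hA1, hdot]
end

section
/- Let L be a graph Laplacian, K positive diagonal, and s ∈ R^n. With z* = (L+K)^{-1}Ks and z̄ its mean-centered version, the quantity z̄^T z̄ + z̄^T L z̄ (polarization plus disagreement) equals s̄_K^T K (L+K)^{-1} (L+I) (L+K)^{-1} K s̄_K, where s̄_K = s - ((s^T K(L+K)^{-1} 1)/n)·1. -/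
open Matrix

theorem stmt2 {n : ℕ} (hn : 0 < n) (L K : Matrix (Fin n) (Fin n) ℝ)
    (hL : L.PosSemidef) (hL1 : L *ᵥ 1 = 0)
    (k : Fin n → ℝ) (hK : K = Matrix.diagonal k) (hk : ∀ i, 0 < k i)
    (s : Fin n → ℝ) :
    let z := ((L + K)⁻¹ * K) *ᵥ s
    let zb := z - ((z ⬝ᵥ (1 : Fin n → ℝ)) / (n : ℝ)) • (1 : Fin n → ℝ)
    let sK := s - ((s ⬝ᵥ ((K * (L + K)⁻¹) *ᵥ (1 : Fin n → ℝ))) / (n : ℝ)) • (1 : Fin n → ℝ)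
    zb ⬝ᵥ zb + zb ⬝ᵥ (L *ᵥ zb)
      = sK ⬝ᵥ ((K * (L + K)⁻¹ * (L + 1) * (L + K)⁻¹ * K) *ᵥ sK) := by
  intro z zb sK
  have hKpd : K.PosDef := by
    rw [hK]; exact Matrix.PosDef.diagonal hk
  have hpd : (L + K).PosDef := Matrix.PosDef.posSemidef_add hL hKpd
  have hinv : IsUnit (L + K).det := hpd.det_pos.ne'.isUnit
  have hAh : ((L + K)⁻¹)ᵀ = (L + K)⁻¹ := hpd.isHermitian.inv
  have hKt : Kᵀ = K := by rw [hK]; exact Matrix.diagonal_transpose k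
  -- (L+K)⁻¹ * K *ᵥ 1 = 1
  have h1 : ((L + K)⁻¹ * K) *ᵥ (1 : Fin n → ℝ) = 1 := by
    have hK1 : K *ᵥ (1 : Fin n → ℝ) = (L + K) *ᵥ 1 := by
      rw [Matrix.add_mulVec, hL1, zero_add]
    rw [← Matrix.mulVec_mulVec, hK1, Matrix.mulVec_mulVec,
      Matrix.nonsing_inv_mul _ hinv, Matrix.one_mulVec]
  -- transpose fact: (K * (L+K)⁻¹)ᵀ = (L+K)⁻¹ * K
  have htr : (K * (L + K)⁻¹)ᵀ = (L + K)⁻¹ * K := by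
    rw [Matrix.transpose_mul, hAh, hKt]
  -- the scalars coincide
  have hc : z ⬝ᵥ (1 : Fin n → ℝ) = s ⬝ᵥ ((K * (L + K)⁻¹) *ᵥ (1 : Fin n → ℝ)) := by
    show (((L + K)⁻¹ * K) *ᵥ s) ⬝ᵥ (1 : Fin n → ℝ) = _
    rw [Matrix.dotProduct_mulVec, ← Matrix.mulVec_transpose, htr,
      dotProduct_comm, Matrix.dotProduct_mulVec, ← Matrix.mulVec_transpose]
  set c : ℝ := z ⬝ᵥ (1 : Fin n → ℝ) / (n : ℝ) with hcdef
  have hsK : sK = s - c • (1 : Fin n → ℝ) := by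
    show s - _ • _ = _
    rw [← hc]
  -- (L+K)⁻¹ K applied to sK equals zb
  have hzb : ((L + K)⁻¹ * K) *ᵥ sK = zb := by
    rw [hsK]
    show ((L + K)⁻¹ * K) *ᵥ (s - c • (1 : Fin n → ℝ)) = z - c • (1 : Fin n → ℝ)
    rw [Matrix.mulVec_sub, Matrix.mulVec_smul, h1]
  -- rewrite RHS
  have key : sK ⬝ᵥ ((K * (L + K)⁻¹ * (L + 1) * (L + K)⁻¹ * K) *ᵥ sK)
      = zb ⬝ᵥ ((L + 1) *ᵥ zb) := by
    have : K * (L + K)⁻¹ * (L + 1) * (L + K)⁻¹ * K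
        = (K * (L + K)⁻¹) * ((L + 1) * ((L + K)⁻¹ * K)) := by
      simp only [Matrix.mul_assoc]
    rw [this, ← Matrix.mulVec_mulVec, Matrix.dotProduct_mulVec, ← Matrix.mulVec_transpose,
      htr, hzb, ← Matrix.mulVec_mulVec, hzb]
  rw [key, Matrix.add_mulVec, Matrix.one_mulVec, dotProduct_add, add_comm]
end

section
/- Let L be a graph Laplacian with eigenvalues 0 = λ_1 < λ_2 ≤ ... ≤ λ_n and α > 2 a real number. For any s ∈ R^n with ||s|| ≤ R, the polarization-disagreement index with homogeneous stubbornness K = αI, namely PD(α) = s̄^T (I + α^{-1}L)^{-1}(I+L)(I + α^{-1}L)^{-1} s̄ where s̄ = s - ((s^T 1)/n)·1, satisfies PD(α) ≤ R^2 α^2 / (4(α-1)). -/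
/-!
With `A = 1 + α⁻¹ L` and `c = α² / (4(α - 1))` one has the matrix identity
`c A² - (1 + L) = (L - (α - 2))² / (4(α - 1))`, whose right side is positive semidefinite
for `α > 1`. Conjugating by the symmetric matrix `A⁻¹` gives `A⁻¹ (1 + L) A⁻¹ ≤ c` in the
Loewner order, so the quadratic form is at most `c ‖s̄‖²`, and centering does not increase
the norm: `‖s̄‖ ≤ ‖s‖ ≤ R`.
-/

open Matrix

namespace Matrix

variable {ι : Type*} [Fintype ι]

lemma dotProduct_mulVec_le_of_posSemidef_smul_one_sub [DecidableEq ι] {M : Matrix ι ι ℝ}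
    {c : ℝ} (h : (c • 1 - M).PosSemidef) (x : ι → ℝ) :
    x ⬝ᵥ (M *ᵥ x) ≤ c * (x ⬝ᵥ x) := by
  have hx := h.dotProduct_mulVec_nonneg x
  simp only [star_trivial, sub_mulVec, smul_mulVec, one_mulVec, dotProduct_sub,
    dotProduct_smul, smul_eq_mul] at hx
  linarith

lemma dotProduct_self_sub_proj_le (s v : ι → ℝ) :
    (s - (s ⬝ᵥ v / (v ⬝ᵥ v)) • v) ⬝ᵥ (s - (s ⬝ᵥ v / (v ⬝ᵥ v)) • v) ≤ s ⬝ᵥ s := by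
  have hexpand : (s - (s ⬝ᵥ v / (v ⬝ᵥ v)) • v) ⬝ᵥ (s - (s ⬝ᵥ v / (v ⬝ᵥ v)) • v)
      = s ⬝ᵥ s - (s ⬝ᵥ v) ^ 2 / (v ⬝ᵥ v) := by
    rcases eq_or_ne (v ⬝ᵥ v) 0 with hv | hv
    · simp [hv]
    · simp only [dotProduct_sub, sub_dotProduct, dotProduct_smul, smul_dotProduct, smul_eq_mul,
        dotProduct_comm v s]
      field_simp
      ring
  have hv : 0 ≤ v ⬝ᵥ v := by simpa using dotProduct_star_self_nonneg v
  rw [hexpand]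
  linarith [div_nonneg (sq_nonneg (s ⬝ᵥ v)) hv]

variable [DecidableEq ι]

lemma smul_sq_one_add_inv_smul_sub_one_add (L : Matrix ι ι ℝ) {α : ℝ} (hα₀ : α ≠ 0)
    (hα₁ : α ≠ 1) :
    (α ^ 2 / (4 * (α - 1))) • ((1 + α⁻¹ • L) * (1 + α⁻¹ • L)) - (1 + L)
      = (4 * (α - 1))⁻¹ • ((L - (α - 2) • 1) * (L - (α - 2) • 1)) := by
  have hα₁' : α - 1 ≠ 0 := sub_ne_zero.mpr hα₁
  simp only [mul_add, add_mul, mul_sub, sub_mul, Matrix.smul_mul, Matrix.mul_smul,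
    Matrix.mul_one, Matrix.one_mul, smul_smul, smul_add, smul_sub]
  match_scalars <;> field_simp <;> ring

theorem PosSemidef.posSemidef_smul_one_sub_resolvent_conj {L : Matrix ι ι ℝ}
    (hL : L.PosSemidef) {α : ℝ} (hα : 1 < α) :
    ((α ^ 2 / (4 * (α - 1))) • 1
      - (1 + α⁻¹ • L)⁻¹ * (1 + L) * (1 + α⁻¹ • L)⁻¹).PosSemidef := by
  set A := 1 + α⁻¹ • L
  set c := α ^ 2 / (4 * (α - 1))
  have hA : A.PosDef := PosDef.one.add_posSemidef (hL.smul (by positivity))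
  have hdet : IsUnit A.det := (isUnit_iff_isUnit_det A).mp hA.isUnit
  have hconj : c • 1 - A⁻¹ * (1 + L) * A⁻¹ = A⁻¹ * (c • (A * A) - (1 + L)) * A⁻¹ := by
    rw [Matrix.mul_sub, Matrix.sub_mul, Matrix.mul_smul, Matrix.smul_mul, ← Matrix.mul_assoc,
      nonsing_inv_mul A hdet, Matrix.one_mul, mul_nonsing_inv A hdet]
  have hB : (L - (α - 2) • 1).IsHermitian := hL.isHermitian.sub (isHermitian_one.smul (.all _))
  have hsq : ((L - (α - 2) • 1) * (L - (α - 2) • 1)).PosSemidef := by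
    have h := posSemidef_conjTranspose_mul_self (L - (α - 2) • 1)
    rwa [hB.eq] at h
  have hα₁ : 0 < α - 1 := by linarith
  rw [hconj, smul_sq_one_add_inv_smul_sub_one_add L (by positivity) hα.ne']
  simpa only [hA.isHermitian.inv.eq] using
    (hsq.smul (by positivity)).mul_mul_conjTranspose_same A⁻¹

end Matrix

theorem stmt4_general {n : ℕ} (L : Matrix (Fin n) (Fin n) ℝ)
    (hL : L.PosSemidef)
    (α R : ℝ) (hα : 2 < α) (s : Fin n → ℝ) (hs : Real.sqrt (s ⬝ᵥ s) ≤ R) :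
    let sb := s - ((s ⬝ᵥ (1 : Fin n → ℝ)) / (n : ℝ)) • (1 : Fin n → ℝ)
    sb ⬝ᵥ (((1 + α⁻¹ • L)⁻¹ * (1 + L) * (1 + α⁻¹ • L)⁻¹) *ᵥ sb)
      ≤ R ^ 2 * α ^ 2 / (4 * (α - 1)) := by
  intro sb
  have hsb : sb ⬝ᵥ sb ≤ s ⬝ᵥ s := by
    have hn : (1 : Fin n → ℝ) ⬝ᵥ 1 = n := by simp
    simpa only [hn] using dotProduct_self_sub_proj_le s 1
  have hsR : s ⬝ᵥ s ≤ R ^ 2 := (Real.sqrt_le_iff.mp hs).2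
  have hα₁ : 0 < α - 1 := by linarith
  calc sb ⬝ᵥ (((1 + α⁻¹ • L)⁻¹ * (1 + L) * (1 + α⁻¹ • L)⁻¹) *ᵥ sb)
      ≤ α ^ 2 / (4 * (α - 1)) * (sb ⬝ᵥ sb) :=
        dotProduct_mulVec_le_of_posSemidef_smul_one_sub
          (hL.posSemidef_smul_one_sub_resolvent_conj (by linarith)) sb
    _ ≤ α ^ 2 / (4 * (α - 1)) * R ^ 2 := by gcongr; exact hsb.trans hsR
    _ = R ^ 2 * α ^ 2 / (4 * (α - 1)) := by ring

theorem stmt4 {n : ℕ} (L : Matrix (Fin n) (Fin n) ℝ)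
    (hL : L.PosSemidef) (hL1 : L *ᵥ 1 = 0)
    (α R : ℝ) (hα : 2 < α) (s : Fin n → ℝ) (hs : Real.sqrt (s ⬝ᵥ s) ≤ R) :
    let sb := s - ((s ⬝ᵥ (1 : Fin n → ℝ)) / (n : ℝ)) • (1 : Fin n → ℝ)
    sb ⬝ᵥ (((1 + α⁻¹ • L)⁻¹ * (1 + L) * (1 + α⁻¹ • L)⁻¹) *ᵥ sb)
      ≤ R ^ 2 * α ^ 2 / (4 * (α - 1)) :=
  stmt4_general L hL α R hα s hs
end

section
/- Monotonicity of polarization-disagreement in homogeneous stubbornness: Let L be a graph Laplacian and s ∈ R^n. Define PD(α) = s̄^T (I + α^{-1}L)^{-1}(I+L)(I + α^{-1}L)^{-1} s̄ and P(α) = s̄^T (I + α^{-1}L)^{-2} s̄ where s̄ = s - ((s^T 1)/n)·1. Then for any 0 < α ≤ β, PD(α) ≤ PD(β) and P(α) ≤ P(β). -/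
/-!
Write `R t = (1 + t L)⁻¹` and `A = 1 + c L`. All these matrices are polynomials in `L`, hence
commute, and for `b ≤ a`
`R b A R b - R a A R a = (R b R a) (A ((1 + a L)² - (1 + b L)²)) (R a R b)`.
The middle factor is `(a - b) L (1 + c L) (2 + (a + b) L)`, a polynomial in `L` with nonnegative
coefficients, so it is positive semidefinite, and so is its congruence by the hermitian
`R b R a`. Thus `t ↦ R t A R t` is antitone in the Loewner order for `t ≥ 0`; with `t = α⁻¹`
and `c = 1` (resp. `c = 0`) this is the monotonicity of `PD` (resp. `P`).
-/

open Matrix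

theorem Commute.one_add_smul {R A : Type*} [CommSemiring R] [Semiring A] [Algebra R A]
    (a : A) (s t : R) : Commute (1 + s • a) (1 + t • a) :=
  (Commute.one_left _).add_left <|
    (Commute.one_right _).add_right (((Commute.refl a).smul_left s).smul_right t)

theorem invOf_mul_mul_invOf_sub_invOf_mul_mul_invOf {R : Type*} [Ring R] (A B C : R)
    [Invertible B] [Invertible C] (hAB : Commute A B) (hAC : Commute A C) (hBC : Commute B C) :
    ⅟B * A * ⅟B - ⅟C * A * ⅟C = (⅟B * ⅟C) * (A * (C * C - B * B)) * (⅟C * ⅟B) := by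
  have hAC' : Commute A (⅟C) := hAC.invOf_right
  have hBC' : Commute B (⅟C) := hBC.invOf_right
  have hB'C' : Commute (⅟B) (⅟C) := hBC'.invOf_left
  have hCC : ⅟B * ⅟C * (A * (C * C)) * (⅟C * ⅟B) = ⅟B * A * ⅟B := by
    simp only [mul_assoc]
    rw [mul_invOf_cancel_left, ← mul_assoc (⅟C) A, ← hAC'.eq, mul_assoc, invOf_mul_cancel_left]
  have hBB : ⅟B * ⅟C * (A * (B * B)) * (⅟C * ⅟B) = ⅟C * A * ⅟C := by
    rw [hB'C'.eq]
    simp only [mul_assoc]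
    rw [← mul_assoc B (⅟C), hBC'.eq, mul_assoc, mul_invOf_self, mul_one, ← mul_assoc A B,
      hAB.eq, mul_assoc, invOf_mul_cancel_left]
  rw [mul_sub A, mul_sub, sub_mul, hCC, hBB]

namespace Matrix.PosSemidef

variable {ι : Type*} [DecidableEq ι] {L : Matrix ι ι ℝ}

theorem posDef_one_add_smul (hL : L.PosSemidef) {t : ℝ} (ht : 0 ≤ t) : (1 + t • L).PosDef :=
  PosDef.one.add_posSemidef (hL.smul ht)

variable [Fintype ι]

theorem one_add_smul_mul_sq_sub_sq (hL : L.PosSemidef) {a b c : ℝ} (hc : 0 ≤ c) (hb : 0 ≤ b)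
    (hba : b ≤ a) :
    ((1 + c • L) * ((1 + a • L) * (1 + a • L) - (1 + b • L) * (1 + b • L))).PosSemidef := by
  have expand : (1 + c • L) * ((1 + a • L) * (1 + a • L) - (1 + b • L) * (1 + b • L)) =
      (2 * (a - b)) • L + ((a - b) * (a + b + 2 * c)) • (L * L)
        + ((a - b) * c * (a + b)) • (L * (L * L)) := by
    simp only [mul_sub, sub_mul, mul_add, add_mul, one_mul, mul_one, mul_smul_comm,
      smul_mul_assoc]
    module
  have hL2 : (L * L).PosSemidef := by simpa [pow_two] using hL.pow 2
  have hL3 : (L * (L * L)).PosSemidef := by simpa [pow_succ, mul_assoc] using hL.pow 3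
  have hab : 0 ≤ a - b := sub_nonneg.2 hba
  rw [expand]
  exact ((hL.smul (by linarith)).add (hL2.smul (by nlinarith))).add
    (hL3.smul (mul_nonneg (mul_nonneg hab hc) (by linarith)))

theorem inv_one_add_smul_sandwich_sub (hL : L.PosSemidef) {a b c : ℝ} (hc : 0 ≤ c)
    (hb : 0 ≤ b) (hba : b ≤ a) :
    ((1 + b • L)⁻¹ * (1 + c • L) * (1 + b • L)⁻¹
      - (1 + a • L)⁻¹ * (1 + c • L) * (1 + a • L)⁻¹).PosSemidef := by
  have hB := hL.posDef_one_add_smul hb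
  have hC := hL.posDef_one_add_smul (hb.trans hba)
  let _ := hB.isUnit.invertible
  let _ := hC.isUnit.invertible
  have key := invOf_mul_mul_invOf_sub_invOf_mul_mul_invOf (1 + c • L) (1 + b • L) (1 + a • L)
    (.one_add_smul L c b) (.one_add_smul L c a) (.one_add_smul L b a)
  simp only [invOf_eq_nonsing_inv] at key
  have hstar : (1 + a • L)⁻¹ * (1 + b • L)⁻¹ = ((1 + b • L)⁻¹ * (1 + a • L)⁻¹)ᴴ := by
    rw [conjTranspose_mul, hB.isHermitian.inv.eq, hC.isHermitian.inv.eq]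
  rw [key, hstar]
  exact (hL.one_add_smul_mul_sq_sub_sq hc hb hba).mul_mul_conjTranspose_same _

theorem antitoneOn_dotProduct_inv_one_add_smul_sandwich (hL : L.PosSemidef) {c : ℝ}
    (hc : 0 ≤ c) (v : ι → ℝ) :
    AntitoneOn (fun t : ℝ => v ⬝ᵥ (((1 + t • L)⁻¹ * (1 + c • L) * (1 + t • L)⁻¹) *ᵥ v))
      (Set.Ici 0) := by
  intro b hb a _ hba
  have := (hL.inv_one_add_smul_sandwich_sub hc (Set.mem_Ici.1 hb) hba).dotProduct_mulVec_nonneg v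
  rwa [star_trivial, sub_mulVec, dotProduct_sub, sub_nonneg] at this

end Matrix.PosSemidef

theorem stmt6_general {n : ℕ} (L : Matrix (Fin n) (Fin n) ℝ)
    (hL : L.PosSemidef)
    (s : Fin n → ℝ) (α β : ℝ) (hα : 0 < α) (hαβ : α ≤ β) :
    let sb := s - ((s ⬝ᵥ (1 : Fin n → ℝ)) / (n : ℝ)) • (1 : Fin n → ℝ)
    let PD : ℝ → ℝ := fun γ => sb ⬝ᵥ (((1 + γ⁻¹ • L)⁻¹ * (1 + L) * (1 + γ⁻¹ • L)⁻¹) *ᵥ sb)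
    let P : ℝ → ℝ := fun γ => sb ⬝ᵥ (((1 + γ⁻¹ • L)⁻¹ * (1 + γ⁻¹ • L)⁻¹) *ᵥ sb)
    PD α ≤ PD β ∧ P α ≤ P β := by
  intro sb PD P
  have hβ : 0 ≤ β⁻¹ := inv_nonneg.2 (hα.trans_le hαβ).le
  have hβα : β⁻¹ ≤ α⁻¹ := inv_anti₀ hα hαβ
  have hα : 0 ≤ α⁻¹ := inv_nonneg.2 hα.le
  constructor
  · have := hL.antitoneOn_dotProduct_inv_one_add_smul_sandwich zero_le_one sb hβ hα hβα
    simpa only [one_smul] using this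
  · have := hL.antitoneOn_dotProduct_inv_one_add_smul_sandwich le_rfl sb hβ hα hβα
    simpa only [zero_smul, add_zero, mul_one] using this

theorem stmt6 {n : ℕ} (L : Matrix (Fin n) (Fin n) ℝ)
    (hL : L.PosSemidef) (hL1 : L *ᵥ 1 = 0)
    (s : Fin n → ℝ) (α β : ℝ) (hα : 0 < α) (hαβ : α ≤ β) :
    let sb := s - ((s ⬝ᵥ (1 : Fin n → ℝ)) / (n : ℝ)) • (1 : Fin n → ℝ)
    let PD : ℝ → ℝ := fun γ => sb ⬝ᵥ (((1 + γ⁻¹ • L)⁻¹ * (1 + L) * (1 + γ⁻¹ • L)⁻¹) *ᵥ sb)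
    let P : ℝ → ℝ := fun γ => sb ⬝ᵥ (((1 + γ⁻¹ • L)⁻¹ * (1 + γ⁻¹ • L)⁻¹) *ᵥ sb)
    PD α ≤ PD β ∧ P α ≤ P β :=
  stmt6_general L hL s α β hα hαβ
end

section
/- Let L be a graph Laplacian and s ∈ R^n with ||s|| ≤ R. For 0 < α < β, the polarization P(γ) = s̄^T (I + γ^{-1}L)^{-2} s̄ (with s̄ = s - ((s^T 1)/n)·1) satisfies P(β) - P(α) ≤ (1/(1+β^{-1}C)^2 - 1/(1+α^{-1}C)^2)·R^2, where C = (α^{1/3} - β^{1/3})/(β^{-2/3} - α^{-2/3}). -/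
/-!
Diagonalise `L`: the matrix `(1 + γ⁻¹ L)⁻²` acts on an eigenvector of eigenvalue `λ ≥ 0` by
`1 / (1 + λ / γ)²`, so `P β - P α` is the quadratic form of `g(L)` at `s̄`, where
`g(λ) = 1 / (1 + λ / β)² - 1 / (1 + λ / α)²`. On `[0, ∞)` the function `g` attains its maximum
at `λ = C`; writing `α = a³`, `β = b³` one has `C = a²b² / (a + b)`, and `g(C) - g(λ)` is a
positive multiple of `((a + b) λ - a²b²)²`. Hence `P β - P α ≤ g(C) ‖s̄‖² ≤ g(C) ‖s‖²`.
-/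

open Matrix
open scoped MatrixOrder

noncomputable def polarizationGap (α β x : ℝ) : ℝ := 1 / (1 + x / β) ^ 2 - 1 / (1 + x / α) ^ 2

lemma polarizationGap_cube_le {a b x : ℝ} (ha : 0 < a) (hab : a < b) (hx : 0 ≤ x) :
    polarizationGap (a ^ 3) (b ^ 3) x ≤ (a + b) ^ 3 * (b - a) / (a ^ 2 + a * b + b ^ 2) ^ 2 := by
  have hb : 0 < b := ha.trans hab
  unfold polarizationGap
  field_simp
  rw [← sub_nonneg]
  calc 0 ≤ (b - a) * ((a + b) * x - a ^ 2 * b ^ 2) ^ 2 * ((a + b) * x ^ 2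
        + 2 * (a ^ 4 + a ^ 3 * b + a ^ 2 * b ^ 2 + a * b ^ 3 + b ^ 4) * x
        + a ^ 2 * b ^ 2 * (a + b) ^ 3) :=
      mul_nonneg (mul_nonneg (sub_nonneg.mpr hab.le) (sq_nonneg _)) (by positivity)
    _ = _ := by ring

lemma polarizationGap_cube_optimum {a b : ℝ} (ha : 0 < a) (hb : 0 < b) :
    polarizationGap (a ^ 3) (b ^ 3) (a ^ 2 * b ^ 2 / (a + b))
      = (a + b) ^ 3 * (b - a) / (a ^ 2 + a * b + b ^ 2) ^ 2 := by
  unfold polarizationGap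
  field_simp
  ring

lemma rpow_cube_div_three {a : ℝ} (ha : 0 ≤ a) (k : ℝ) : (a ^ 3) ^ (k / 3) = a ^ k := by
  rw [← Real.rpow_natCast, ← Real.rpow_mul ha, Nat.cast_ofNat, mul_div_cancel₀ k three_ne_zero]

lemma sub_div_inv_sq_sub_inv_sq {a b : ℝ} (ha : 0 < a) (hb : 0 < b) (hab : a ≠ b) :
    (a - b) / ((b ^ 2)⁻¹ - (a ^ 2)⁻¹) = a ^ 2 * b ^ 2 / (a + b) := by
  have hsub : a - b ≠ 0 := sub_ne_zero.mpr hab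
  rw [inv_sub_inv (by positivity) (by positivity), div_div_eq_mul_div, sq_sub_sq]
  field_simp

lemma exists_cube_eq {α : ℝ} (hα : 0 < α) : ∃ a, 0 < a ∧ a ^ 3 = α :=
  ⟨α ^ ((3 : ℕ)⁻¹ : ℝ), by positivity, Real.rpow_inv_natCast_pow hα.le three_ne_zero⟩

lemma polarizationGap_le_optimum {α β x : ℝ} (hα : 0 < α) (hαβ : α < β) (hx : 0 ≤ x) :
    polarizationGap α β x ≤ polarizationGap α β
      ((α ^ ((1 : ℝ) / 3) - β ^ ((1 : ℝ) / 3)) / (β ^ (-(2 : ℝ) / 3) - α ^ (-(2 : ℝ) / 3))) := by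
  obtain ⟨a, ha, rfl⟩ := exists_cube_eq hα
  obtain ⟨b, hb, rfl⟩ := exists_cube_eq (hα.trans hαβ)
  have hab : a < b := lt_of_pow_lt_pow_left₀ 3 hb.le hαβ
  simp only [rpow_cube_div_three ha.le, rpow_cube_div_three hb.le, Real.rpow_one,
    Real.rpow_neg ha.le, Real.rpow_neg hb.le]
  norm_cast
  rw [sub_div_inv_sq_sub_inv_sq ha hb hab.ne]
  exact (polarizationGap_cube_le ha hab hx).trans (polarizationGap_cube_optimum ha hb).ge

section

variable {n : Type*} [Fintype n] [DecidableEq n]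

lemma Matrix.PosSemidef.inv_one_add_smul_eq_cfc {A : Matrix n n ℝ} (hA : A.PosSemidef) {t : ℝ}
    (ht : 0 ≤ t) : (1 + t • A)⁻¹ = cfc (fun x ↦ (1 + t * x)⁻¹) A := by
  rw [nonsing_inv_eq_ringInverse, cfc_inv (fun x ↦ 1 + t * x) A, cfc_const_add 1 (t * ·) A,
    cfc_const_mul_id t A, map_one]
  intro x hx
  have hx0 := spectrum_nonneg_of_nonneg hA.nonneg hx
  positivity

lemma Matrix.PosSemidef.inv_one_add_smul_mul_self_eq_cfc {A : Matrix n n ℝ} (hA : A.PosSemidef)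
    {γ : ℝ} (hγ : 0 < γ) :
    (1 + γ⁻¹ • A)⁻¹ * (1 + γ⁻¹ • A)⁻¹ = cfc (fun x ↦ 1 / (1 + x / γ) ^ 2) A := by
  have hcont := A.finite_real_spectrum.continuousOn (fun x ↦ (1 + γ⁻¹ * x)⁻¹)
  rw [hA.inv_one_add_smul_eq_cfc (inv_nonneg.mpr hγ.le), ← cfc_mul _ _ A hcont hcont]
  refine cfc_congr fun x _ ↦ ?_
  rw [div_eq_inv_mul x γ, one_div, sq, mul_inv]

lemma Matrix.IsHermitian.dotProduct_cfc_mulVec_le {A : Matrix n n ℝ} (hA : A.IsHermitian)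
    {f : ℝ → ℝ} {c : ℝ} (hf : ∀ x ∈ spectrum ℝ A, f x ≤ c) (v : n → ℝ) :
    v ⬝ᵥ (cfc f A *ᵥ v) ≤ c * (v ⬝ᵥ v) := by
  have h := Matrix.le_iff.mp (cfc_le_algebraMap f c A hf (A.finite_real_spectrum.continuousOn f)
    hA.isSelfAdjoint) |>.dotProduct_mulVec_nonneg v
  rw [Algebra.algebraMap_eq_smul_one, sub_mulVec, smul_mulVec, one_mulVec, star_trivial,
    dotProduct_sub, dotProduct_smul, smul_eq_mul] at h
  linarith

end

lemma dotProduct_self_sub_mean_le {n : ℕ} (s : Fin n → ℝ) :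
    (s - ((s ⬝ᵥ 1) / n) • 1) ⬝ᵥ (s - ((s ⬝ᵥ 1) / n) • 1) ≤ s ⬝ᵥ s := by
  set m := (s ⬝ᵥ 1) / (n : ℝ)
  have hm : m * (m * n) = m * (s ⬝ᵥ 1) := by
    rcases eq_or_ne (n : ℝ) 0 with hn | hn
    · simp [m, hn]
    · rw [div_mul_cancel₀ _ hn]
  have hm_nonneg : 0 ≤ m * (s ⬝ᵥ 1) := by
    rw [show m * (s ⬝ᵥ 1) = (s ⬝ᵥ 1) ^ 2 / n by ring]
    positivity
  have hexpand : (s - m • 1) ⬝ᵥ (s - m • 1) = s ⬝ᵥ s - 2 * m * (s ⬝ᵥ 1) + m * (m * n) := by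
    simp only [dotProduct_sub, sub_dotProduct, smul_dotProduct, dotProduct_smul,
      dotProduct_comm 1 s, one_dotProduct_one, Fintype.card_fin, smul_eq_mul]
    ring
  linarith

theorem stmt8_general {n : ℕ} (L : Matrix (Fin n) (Fin n) ℝ)
    (hL : L.PosSemidef)
    (s : Fin n → ℝ) (R α β : ℝ) (hα : 0 < α) (hαβ : α < β)
    (hs : Real.sqrt (s ⬝ᵥ s) ≤ R) :
    let sb := s - ((s ⬝ᵥ (1 : Fin n → ℝ)) / (n : ℝ)) • (1 : Fin n → ℝ)
    let P : ℝ → ℝ := fun γ => sb ⬝ᵥ (((1 + γ⁻¹ • L)⁻¹ * (1 + γ⁻¹ • L)⁻¹) *ᵥ sb)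
    let C := (α ^ ((1 : ℝ) / 3) - β ^ ((1 : ℝ) / 3)) / (β ^ (-(2 : ℝ) / 3) - α ^ (-(2 : ℝ) / 3))
    P β - P α ≤ (1 / (1 + C / β) ^ 2 - 1 / (1 + C / α) ^ 2) * R ^ 2 := by
  intro sb P C
  have hspec : ∀ x ∈ spectrum ℝ L, 0 ≤ x := fun x hx ↦ spectrum_nonneg_of_nonneg hL.nonneg hx
  have hcont (γ : ℝ) := L.finite_real_spectrum.continuousOn (fun x ↦ 1 / (1 + x / γ) ^ 2)
  have hgap : P β - P α = sb ⬝ᵥ (cfc (polarizationGap α β) L *ᵥ sb) := by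
    simp only [P, hL.inv_one_add_smul_mul_self_eq_cfc hα,
      hL.inv_one_add_smul_mul_self_eq_cfc (hα.trans hαβ), ← dotProduct_sub, ← sub_mulVec]
    rw [← cfc_sub _ _ L (hcont β) (hcont α)]
    rfl
  have hC_nonneg : 0 ≤ polarizationGap α β C := by
    have h0 : polarizationGap α β 0 = 0 := by simp [polarizationGap]
    exact h0 ▸ polarizationGap_le_optimum hα hαβ le_rfl
  calc P β - P α ≤ polarizationGap α β C * (sb ⬝ᵥ sb) := hgap ▸
        hL.isHermitian.dotProduct_cfc_mulVec_le
          (fun x hx ↦ polarizationGap_le_optimum hα hαβ (hspec x hx)) sb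
    _ ≤ polarizationGap α β C * R ^ 2 :=
        mul_le_mul_of_nonneg_left
          ((dotProduct_self_sub_mean_le s).trans (Real.sqrt_le_iff.mp hs).2) hC_nonneg

theorem stmt8 {n : ℕ} (L : Matrix (Fin n) (Fin n) ℝ)
    (hL : L.PosSemidef) (hL1 : L *ᵥ 1 = 0)
    (s : Fin n → ℝ) (R α β : ℝ) (hα : 0 < α) (hαβ : α < β)
    (hs : Real.sqrt (s ⬝ᵥ s) ≤ R) :
    let sb := s - ((s ⬝ᵥ (1 : Fin n → ℝ)) / (n : ℝ)) • (1 : Fin n → ℝ)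
    let P : ℝ → ℝ := fun γ => sb ⬝ᵥ (((1 + γ⁻¹ • L)⁻¹ * (1 + γ⁻¹ • L)⁻¹) *ᵥ sb)
    let C := (α ^ ((1 : ℝ) / 3) - β ^ ((1 : ℝ) / 3)) / (β ^ (-(2 : ℝ) / 3) - α ^ (-(2 : ℝ) / 3))
    P β - P α ≤ (1 / (1 + C / β) ^ 2 - 1 / (1 + C / α) ^ 2) * R ^ 2 :=
  stmt8_general L hL s R α β hα hαβ hs
end

section
/- Let n be even, p > q > 0, and let L̄ be the expected Laplacian of the two-block stochastic block model: L̄ = (n/2)(p+q)I - Ā, where Ā_{ij} = p if i,j are in the same block and q otherwise. Let s ∈ R^n be +1 on the first block and -1 on the second block. Then s is an eigenvector of L̄ with eigenvalue nq, and the homogeneous polarization-disagreement PD(α) = s^T (I+α^{-1}L̄)^{-1}(I+L̄)(I+α^{-1}L̄)^{-1} s equals α^2(1+nq)n/(nq+α)^2. -/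
/-!
Write `L̄ = k(p+q)·I - Ā` with `k = n/2`. Evaluating `Ā` on a vector only sees its two block sums,
so `Ā s = k(p-q) s` and `L̄ s = 2kq s = nq s`; by Cauchy–Schwarz on each block the quadratic form
of `L̄` is at least `q (S₊ - S₋)² ≥ 0`, so `L̄` is positive semidefinite and `I + α⁻¹L̄` is
invertible. Hence `(I + α⁻¹L̄)⁻¹ s = (1 + nq/α)⁻¹ s`, and
`PD(α) = (1 + nq) / (1 + nq/α)² · ‖s‖² = α²(1 + nq) n / (nq + α)²`.
-/

open Matrix Finset

theorem Matrix.inv_mulVec_of_mulVec_eq_smul {ι K : Type*} [Fintype ι] [DecidableEq ι] [Field K]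
    {M : Matrix ι ι K} (hM : IsUnit M) {v : ι → K} {c : K} (hv : M *ᵥ v = c • v) :
    M⁻¹ *ᵥ v = c⁻¹ • v := by
  have hv' : v = c • (M⁻¹ *ᵥ v) := by
    rw [← mulVec_smul, ← hv, mulVec_mulVec,
      nonsing_inv_mul M ((isUnit_iff_isUnit_det M).mp hM), one_mulVec]
  rcases eq_or_ne c 0 with rfl | hc
  · rw [zero_smul] at hv'
    simp [hv']
  · conv_rhs => rw [hv', smul_smul, inv_mul_cancel₀ hc, one_smul]

section PolarizationDisagreement

variable {ι : Type*} [Fintype ι] [DecidableEq ι]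

noncomputable def polarizationDisagreement (L : Matrix ι ι ℝ) (α : ℝ) (s : ι → ℝ) : ℝ :=
  s ⬝ᵥ (((1 + α⁻¹ • L)⁻¹ * (1 + L) * (1 + α⁻¹ • L)⁻¹) *ᵥ s)

theorem polarizationDisagreement_of_mulVec_eq_smul {L : Matrix ι ι ℝ} (hL : L.PosSemidef)
    {α : ℝ} (hα : 0 < α) {s : ι → ℝ} {μ : ℝ} (hs : L *ᵥ s = μ • s) :
    polarizationDisagreement L α s = (1 + μ) / (1 + α⁻¹ * μ) ^ 2 * (s ⬝ᵥ s) := by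
  have hM : IsUnit (1 + α⁻¹ • L) :=
    (PosDef.one.add_posSemidef (hL.smul (inv_nonneg.mpr hα.le))).isUnit
  have hMs : (1 + α⁻¹ • L)⁻¹ *ᵥ s = (1 + α⁻¹ * μ)⁻¹ • s := by
    refine inv_mulVec_of_mulVec_eq_smul hM ?_
    rw [add_mulVec, one_mulVec, smul_mulVec, hs, smul_smul, add_smul, one_smul]
  have hNs : (1 + L) *ᵥ s = (1 + μ) • s := by
    rw [add_mulVec, one_mulVec, hs, add_smul, one_smul]
  simp only [polarizationDisagreement, ← mulVec_mulVec, hMs, mulVec_smul, hNs, dotProduct_smul,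
    smul_eq_mul]
  rw [div_eq_mul_inv, ← inv_pow]
  ring

end PolarizationDisagreement

section TwoBlock

variable {ι : Type*} (b : ι → Prop) [DecidablePred b]

def twoBlockMatrix (p q : ℝ) : Matrix ι ι ℝ :=
  of fun i j => if (b i ↔ b j) then p else q

def blockSign : ι → ℝ := fun i => if b i then 1 else -1

variable {b}

theorem twoBlockMatrix_isHermitian (p q : ℝ) : (twoBlockMatrix b p q).IsHermitian := by
  rw [isHermitian_iff_isSymm]
  ext i j
  simp only [transpose_apply, twoBlockMatrix, of_apply, iff_comm]

variable [Fintype ι]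

theorem twoBlockMatrix_mulVec_apply (p q : ℝ) (x : ι → ℝ) (i : ι) :
    (twoBlockMatrix b p q *ᵥ x) i =
      (if b i then p else q) * ∑ j with b j, x j
        + (if b i then q else p) * ∑ j with ¬ b j, x j := by
  rw [mulVec, dotProduct, ← sum_filter_add_sum_filter_not univ b, mul_sum, mul_sum]
  congr 1 <;> refine sum_congr rfl fun j hj => ?_
  · by_cases hi : b i <;> simp [twoBlockMatrix, hi, (mem_filter.1 hj).2]
  · by_cases hi : b i <;> simp [twoBlockMatrix, hi, (mem_filter.1 hj).2]

theorem dotProduct_twoBlockMatrix_mulVec (p q : ℝ) (x : ι → ℝ) :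
    x ⬝ᵥ (twoBlockMatrix b p q *ᵥ x) =
      p * ((∑ j with b j, x j) ^ 2 + (∑ j with ¬ b j, x j) ^ 2)
        + 2 * q * (∑ j with b j, x j) * ∑ j with ¬ b j, x j := by
  set S := ∑ j with b j, x j
  set S' := ∑ j with ¬ b j, x j
  have hS : ∑ i with b i, x i * (twoBlockMatrix b p q *ᵥ x) i = S * (p * S + q * S') := by
    rw [sum_mul]
    refine sum_congr rfl fun i hi => ?_
    rw [twoBlockMatrix_mulVec_apply, if_pos (mem_filter.1 hi).2, if_pos (mem_filter.1 hi).2]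
  have hS' : ∑ i with ¬ b i, x i * (twoBlockMatrix b p q *ᵥ x) i = S' * (q * S + p * S') := by
    rw [sum_mul]
    refine sum_congr rfl fun i hi => ?_
    rw [twoBlockMatrix_mulVec_apply, if_neg (mem_filter.1 hi).2, if_neg (mem_filter.1 hi).2]
  rw [dotProduct, ← sum_filter_add_sum_filter_not univ b, hS, hS']
  ring

theorem sum_blockSign_pos : ∑ j with b j, blockSign b j = #{j | b j} := by
  rw [sum_congr rfl (g := fun _ => 1) fun j hj => by simp [blockSign, (mem_filter.1 hj).2],
    sum_const, nsmul_one]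

theorem sum_blockSign_neg : ∑ j with ¬ b j, blockSign b j = -#{j | ¬ b j} := by
  rw [sum_congr rfl (g := fun _ => -1) fun j hj => by simp [blockSign, (mem_filter.1 hj).2],
    sum_const, nsmul_eq_mul, mul_neg_one]

theorem blockSign_dotProduct_self : blockSign b ⬝ᵥ blockSign b = Fintype.card ι := by
  rw [dotProduct, sum_congr rfl (g := fun _ => 1) fun j _ => by
    by_cases hj : b j <;> simp [blockSign, hj], sum_const, nsmul_one, card_univ]

variable {k : ℕ} (hk : #{i | b i} = k) (hk' : #{i | ¬ b i} = k)
include hk hk'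

theorem twoBlockMatrix_mulVec_blockSign (p q : ℝ) :
    twoBlockMatrix b p q *ᵥ blockSign b = ((k : ℝ) * (p - q)) • blockSign b := by
  ext i
  rw [twoBlockMatrix_mulVec_apply, sum_blockSign_pos, sum_blockSign_neg, hk, hk']
  by_cases hi : b i <;> simp [blockSign, hi] <;> ring

theorem posSemidef_smul_one_sub_twoBlockMatrix [DecidableEq ι] {p q : ℝ} (hq : 0 ≤ q)
    (hpq : 0 ≤ p + q) : (((k : ℝ) * (p + q)) • 1 - twoBlockMatrix b p q).PosSemidef := by
  refine PosSemidef.of_dotProduct_mulVec_nonneg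
    ((isHermitian_one.smul (.all _)).sub (twoBlockMatrix_isHermitian p q)) fun x => ?_
  set S := ∑ j with b j, x j
  set S' := ∑ j with ¬ b j, x j
  have hCS : S ^ 2 ≤ k * ∑ j with b j, x j ^ 2 := hk ▸ sq_sum_le_card_mul_sum_sq
  have hCS' : S' ^ 2 ≤ k * ∑ j with ¬ b j, x j ^ 2 := hk' ▸ sq_sum_le_card_mul_sum_sq
  have hxx : x ⬝ᵥ x = ∑ j with b j, x j ^ 2 + ∑ j with ¬ b j, x j ^ 2 := by
    simp only [dotProduct, ← sq, sum_filter_add_sum_filter_not]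
  rw [star_trivial, sub_mulVec, dotProduct_sub, smul_mulVec, one_mulVec, dotProduct_smul,
    smul_eq_mul, hxx, dotProduct_twoBlockMatrix_mulVec]
  -- `(p + q)(S² + S'²) - p(S² + S'²) - 2qSS' = q(S - S')²`
  nlinarith [mul_nonneg hpq (sub_nonneg.2 hCS), mul_nonneg hpq (sub_nonneg.2 hCS'),
    mul_nonneg hq (sq_nonneg (S - S'))]

end TwoBlock

theorem Fin.card_filter_val_lt_half (n : ℕ) : #{i : Fin n | (i : ℕ) < n / 2} = n / 2 := by
  rw [Fin.card_filter_val_lt]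
  omega

theorem Fin.card_filter_not_val_lt_half {n : ℕ} (hn : Even n) :
    #{i : Fin n | ¬ (i : ℕ) < n / 2} = n / 2 := by
  have := card_filter_add_card_filter_not (s := univ) fun i : Fin n => (i : ℕ) < n / 2
  rw [Fin.card_filter_val_lt_half, card_univ, Fintype.card_fin] at this
  obtain ⟨m, rfl⟩ := hn
  omega

theorem stmt9_general {n : ℕ} (hn : Even n) (p q α : ℝ)
    (hq : 0 < q) (hpq : q < p) (hα : 0 < α) :
    let A : Matrix (Fin n) (Fin n) ℝ :=
      Matrix.of fun i j => if ((i : ℕ) < n / 2 ↔ (j : ℕ) < n / 2) then p else q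
    let Lb := ((n : ℝ) / 2 * (p + q)) • (1 : Matrix (Fin n) (Fin n) ℝ) - A
    let s : Fin n → ℝ := fun i => if (i : ℕ) < n / 2 then 1 else -1
    Lb *ᵥ s = ((n : ℝ) * q) • s ∧
    s ⬝ᵥ (((1 + α⁻¹ • Lb)⁻¹ * (1 + Lb) * (1 + α⁻¹ • Lb)⁻¹) *ᵥ s)
      = α ^ 2 * (1 + (n : ℝ) * q) * n / ((n : ℝ) * q + α) ^ 2 := by
  intro A Lb s
  set b : Fin n → Prop := fun i => (i : ℕ) < n / 2
  have hk : #{i | b i} = n / 2 := Fin.card_filter_val_lt_half n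
  have hk' : #{i | ¬ b i} = n / 2 := Fin.card_filter_not_val_lt_half hn
  have hn2 : (n : ℝ) / 2 = (n / 2 : ℕ) := (Nat.cast_div (even_iff_two_dvd.1 hn) two_ne_zero).symm
  have hLb : Lb = (((n / 2 : ℕ) : ℝ) * (p + q)) • 1 - twoBlockMatrix b p q := by
    rw [← hn2]
    rfl
  have hs : s = blockSign b := rfl
  have hLs : Lb *ᵥ s = ((n : ℝ) * q) • s := by
    rw [hLb, hs, sub_mulVec, smul_mulVec, one_mulVec, twoBlockMatrix_mulVec_blockSign hk hk',
      ← sub_smul, ← hn2]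
    congr 1
    ring
  refine ⟨hLs, ?_⟩
  have hLpsd : Lb.PosSemidef :=
    hLb ▸ posSemidef_smul_one_sub_twoBlockMatrix hk hk' hq.le (by linarith)
  change polarizationDisagreement Lb α s = _
  rw [polarizationDisagreement_of_mulVec_eq_smul hLpsd hα hLs, hs, blockSign_dotProduct_self,
    Fintype.card_fin]
  have hden : (n : ℝ) * q + α ≠ 0 := by positivity
  field_simp
  ring

theorem stmt9 {n : ℕ} (hn : Even n) (hn0 : 0 < n) (p q α : ℝ)
    (hq : 0 < q) (hpq : q < p) (hα : 0 < α) :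
    let A : Matrix (Fin n) (Fin n) ℝ :=
      Matrix.of fun i j => if ((i : ℕ) < n / 2 ↔ (j : ℕ) < n / 2) then p else q
    let Lb := ((n : ℝ) / 2 * (p + q)) • (1 : Matrix (Fin n) (Fin n) ℝ) - A
    let s : Fin n → ℝ := fun i => if (i : ℕ) < n / 2 then 1 else -1
    Lb *ᵥ s = ((n : ℝ) * q) • s ∧
    s ⬝ᵥ (((1 + α⁻¹ • Lb)⁻¹ * (1 + Lb) * (1 + α⁻¹ • Lb)⁻¹) *ᵥ s)
      = α ^ 2 * (1 + (n : ℝ) * q) * n / ((n : ℝ) * q + α) ^ 2 :=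
  stmt9_general hn p q α hq hpq hα
end

section
/- Let L be a graph Laplacian, s ∈ R^n with s^T 1 = 0 and s_l = 0 for a fixed index l. Let K = I + ε e_l e_l^T with ε > 0, r_{ll} = [(I+L)^{-1}]_{ll}, z̄^{FJ} = (I+L)^{-1}s, and let PD = s^T (I+L)^{-1} s be the vanilla FJ polarization-disagreement. Then the new polarization-disagreement with stubbornness K satisfies P̂D = PD - (1/n)⟨s, K(L+K)^{-1}1⟩^2 - ((2ε + ε^2 r_{ll})/(1+ε r_{ll})^2)·(z̄^{FJ}_l)^2, where P̂D = s̄_K^T K(L+K)^{-1}(L+I)(L+K)^{-1}K s̄_K with s̄_K = s - ((s^T K(L+K)^{-1}1)/n)·1. In particular, P̂D ≤ PD: increasing the stubbornness of a neutral node does not increase the polarization-disagreement index. -/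
open Matrix

set_option maxHeartbeats 1000000 in
theorem stmt13 {n : ℕ} (hn : 0 < n) (L : Matrix (Fin n) (Fin n) ℝ)
    (hL : L.PosSemidef) (hL1 : L *ᵥ 1 = 0)
    (s : Fin n → ℝ) (hs1 : s ⬝ᵥ (1 : Fin n → ℝ) = 0) (l : Fin n) (hsl : s l = 0)
    (ε : ℝ) (hε : 0 < ε) :
    let K : Matrix (Fin n) (Fin n) ℝ := 1 + ε • Matrix.single l l 1
    let r : ℝ := (1 + L)⁻¹ l l
    let zFJ := (1 + L)⁻¹ *ᵥ s
    let PD := s ⬝ᵥ ((1 + L)⁻¹ *ᵥ s)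
    let oneK := (K * (L + K)⁻¹) *ᵥ (1 : Fin n → ℝ)
    let sK := s - ((s ⬝ᵥ oneK) / (n : ℝ)) • (1 : Fin n → ℝ)
    let PDhat := sK ⬝ᵥ ((K * (L + K)⁻¹ * (L + 1) * (L + K)⁻¹ * K) *ᵥ sK)
    PDhat = PD - (1 / (n : ℝ)) * (s ⬝ᵥ oneK) ^ 2
          - ((2 * ε + ε ^ 2 * r) / (1 + ε * r) ^ 2) * (zFJ l) ^ 2
    ∧ PDhat ≤ PD := by
  intro K r zFJ PD oneK sK PDhat
  set A : Matrix (Fin n) (Fin n) ℝ := 1 + L with hAdef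
  set E : Matrix (Fin n) (Fin n) ℝ := Matrix.single l l 1 with hEdef
  set el : Fin n → ℝ := Pi.single l 1 with heldef
  have hEdiag : E = Matrix.diagonal el := by
    ext i j
    simp only [hEdef, heldef, Matrix.single, Matrix.diagonal, Matrix.of_apply,
      Pi.single_apply]
    aesop
  have hel0 : el ≠ 0 := by
    intro h; have := congrFun h l; simp [heldef] at this
  -- A is positive definite
  have hA : A.PosDef := Matrix.PosDef.one.add_posSemidef hL
  have hAdet : IsUnit A.det := (Matrix.isUnit_iff_isUnit_det A).mp hA.isUnit
  have hAAinv : A * A⁻¹ = 1 := Matrix.mul_nonsing_inv A hAdet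
  have hAinvA : A⁻¹ * A = 1 := Matrix.nonsing_inv_mul A hAdet
  -- r positive
  have hr : 0 < r := by
    have h1 := hA.inv.dotProduct_mulVec_pos hel0
    simpa [heldef, hAdef, Matrix.mulVec_single, dotProduct_single, r] using h1
  have hden : (1 : ℝ) + ε * r ≠ 0 := by positivity
  -- symmetry of A⁻¹
  have hAinvT : A⁻¹ᵀ = A⁻¹ := by
    have := hA.inv.isHermitian
    rwa [Matrix.IsHermitian, Matrix.conjTranspose_eq_transpose_of_trivial] at this
  have hdot : ∀ x y : Fin n → ℝ, x ⬝ᵥ (A⁻¹ *ᵥ y) = (A⁻¹ *ᵥ x) ⬝ᵥ y := by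
    intro x y
    rw [Matrix.dotProduct_mulVec, ← hAinvT, Matrix.vecMul_transpose, hAinvT]
  -- basic vectors
  set u : Fin n → ℝ := A⁻¹ *ᵥ el with hudef
  have hul : u l = r := by simp [hudef, hAdef, heldef, Matrix.mulVec_single, r]
  have hA1 : A *ᵥ (1 : Fin n → ℝ) = 1 := by
    rw [hAdef, Matrix.add_mulVec, Matrix.one_mulVec, hL1, add_zero]
  have hcan : ∀ x : Fin n → ℝ, A⁻¹ *ᵥ (A *ᵥ x) = x := by
    intro x; rw [Matrix.mulVec_mulVec, hAinvA, Matrix.one_mulVec]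
  have hcan' : ∀ x : Fin n → ℝ, A *ᵥ (A⁻¹ *ᵥ x) = x := by
    intro x; rw [Matrix.mulVec_mulVec, hAAinv, Matrix.one_mulVec]
  have hAinv1 : A⁻¹ *ᵥ (1 : Fin n → ℝ) = 1 := by
    conv_lhs => rw [← hA1]
    exact hcan 1
  set z : Fin n → ℝ := A⁻¹ *ᵥ s with hzdef
  -- dot product facts
  have hdots : ∀ x : Fin n → ℝ, x ⬝ᵥ el = x l := by
    intro x; simp [heldef, dotProduct_single]
  have h11 : (1 : Fin n → ℝ) ⬝ᵥ 1 = (n : ℝ) := by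
    simp [dotProduct]
  have h1el : (1 : Fin n → ℝ) ⬝ᵥ el = 1 := by simp [hdots]
  have hz1 : z ⬝ᵥ (1 : Fin n → ℝ) = 0 := by
    rw [hzdef, dotProduct_comm, hdot, hAinv1, dotProduct_comm]
    exact hs1
  have hsu : s ⬝ᵥ u = z l := by
    rw [hudef, hdot, ← hzdef, hdots]
  have hu1 : u ⬝ᵥ (1 : Fin n → ℝ) = 1 := by
    rw [hudef, dotProduct_comm, hdot, hAinv1, h1el]
  have huel : u ⬝ᵥ el = r := by rw [hdots, hul]
  have hzel : z ⬝ᵥ el = z l := hdots z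
  -- Sherman-Morrison: inverse of L + K
  set N : Matrix (Fin n) (Fin n) ℝ :=
    A⁻¹ - (ε / (1 + ε * r)) • (A⁻¹ * E * A⁻¹) with hNdef
  have hLK : L + K = A + ε • E := by
    rw [hAdef, hEdef]
    unfold K
    rw [← add_assoc, add_comm L 1]
  have hEAE : E * A⁻¹ * E = r • E := by
    rw [hEdiag]
    ext i j
    rw [Matrix.mul_diagonal, Matrix.diagonal_mul, Matrix.smul_apply, Matrix.diagonal_apply]
    rcases eq_or_ne i l with hi | hi <;> rcases eq_or_ne j l with hj | hj <;>
      simp [hi, hj, heldef, hAdef, Pi.single_apply, r, Ne.symm]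
  have hMN : (L + K) * N = 1 := by
    have eA : A * N = 1 - (ε / (1 + ε * r)) • (E * A⁻¹) := by
      rw [hNdef, Matrix.mul_sub, Matrix.mul_smul]
      simp only [← Matrix.mul_assoc]
      rw [hAAinv, Matrix.one_mul]
    have eE : E * N = (1 / (1 + ε * r)) • (E * A⁻¹) := by
      rw [hNdef, Matrix.mul_sub, Matrix.mul_smul]
      simp only [← Matrix.mul_assoc]
      rw [hEAE, Matrix.smul_mul, smul_smul]
      have hrw : E * A⁻¹ - (ε / (1 + ε * r) * r) • (E * A⁻¹)
          = (1 - ε / (1 + ε * r) * r) • (E * A⁻¹) := by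
        rw [sub_smul, one_smul]
      rw [hrw]
      congr 1
      field_simp
      ring
    rw [hLK, Matrix.add_mul, Matrix.smul_mul, eA, eE, smul_smul]
    rw [mul_one_div, sub_add_cancel]
  have hMinv : (L + K)⁻¹ = N := Matrix.inv_eq_right_inv hMN
  -- mulVec formulas
  have hEmv : ∀ x : Fin n → ℝ, E *ᵥ x = x l • el := by
    intro x
    rw [hEdiag]
    ext i
    rcases eq_or_ne i l with hi | hi <;>
      simp [Matrix.mulVec_diagonal, heldef, Pi.single_apply, hi, Ne.symm]
  have hK : ∀ x : Fin n → ℝ, K *ᵥ x = x + (ε * x l) • el := by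
    intro x
    have hKE : K = 1 + ε • E := rfl
    rw [hKE, Matrix.add_mulVec, Matrix.one_mulVec, Matrix.smul_mulVec, hEmv, smul_smul]
  have hN : ∀ x : Fin n → ℝ,
      N *ᵥ x = A⁻¹ *ᵥ x - (ε / (1 + ε * r) * (A⁻¹ *ᵥ x) l) • u := by
    intro x
    rw [hNdef, Matrix.sub_mulVec, Matrix.smul_mulVec]
    congr 1
    rw [← Matrix.mulVec_mulVec, ← Matrix.mulVec_mulVec, hEmv, Matrix.mulVec_smul, ← hudef,
      smul_smul]
  -- formula for oneK
  have hN1 : N *ᵥ (1 : Fin n → ℝ) = 1 - (ε / (1 + ε * r)) • u := by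
    rw [hN, hAinv1, Pi.one_apply, mul_one]
  have honeK : oneK = 1 - (ε / (1 + ε * r)) • u
      + (ε * (1 - ε / (1 + ε * r) * r)) • el := by
    have h0 : oneK = (K * (L + K)⁻¹) *ᵥ (1 : Fin n → ℝ) := rfl
    rw [h0, hMinv, ← Matrix.mulVec_mulVec, hN1, hK]
    congr 2
    simp [Pi.sub_apply, Pi.smul_apply, Pi.one_apply, hul]
  set c0 : ℝ := s ⬝ᵥ oneK with hc0def
  have h1s : (1 : Fin n → ℝ) ⬝ᵥ s = 0 := by rw [dotProduct_comm]; exact hs1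
  have hus : u ⬝ᵥ s = z l := by rw [dotProduct_comm]; exact hsu
  have hzs : z ⬝ᵥ s = PD := by rw [dotProduct_comm, hzdef]
  have hc0 : c0 = -(ε / (1 + ε * r) * z l) := by
    rw [hc0def, honeK]
    rw [dotProduct_add, dotProduct_sub, dotProduct_smul,
      dotProduct_smul, hs1, hsu, hdots s, hsl]
    simp
  -- the key vectors
  set q : ℝ := ε / (1 + ε * r) with hqdef
  set β : ℝ := q * z l with hβdef
  set cc : ℝ := c0 / n with hccdef
  have hsKeq : sK = s - cc • (1 : Fin n → ℝ) := rfl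
  have hw : K *ᵥ sK = s - cc • (1 : Fin n → ℝ) - (cc * ε) • el := by
    rw [hsKeq, Matrix.mulVec_sub, Matrix.mulVec_smul, hK s, hK 1, hsl, mul_zero, zero_smul,
      add_zero, Pi.one_apply, mul_one, smul_add, smul_smul, sub_add_eq_sub_sub]
  have hAinvw : A⁻¹ *ᵥ (s - cc • (1 : Fin n → ℝ) - (cc * ε) • el)
      = z - cc • (1 : Fin n → ℝ) - (cc * ε) • u := by
    rw [Matrix.mulVec_sub, Matrix.mulVec_sub, Matrix.mulVec_smul, Matrix.mulVec_smul, hAinv1,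
      ← hzdef, ← hudef]
  have hv : N *ᵥ (K *ᵥ sK) = z - cc • (1 : Fin n → ℝ) - β • u := by
    rw [hw, hN, hAinvw]
    have hcomp : (z - cc • (1 : Fin n → ℝ) - (cc * ε) • u) l = z l - cc - cc * ε * r := by
      simp only [Pi.sub_apply, Pi.smul_apply, Pi.one_apply, smul_eq_mul, hul]
      ring
    rw [hcomp]
    ext i
    simp only [Pi.sub_apply, Pi.smul_apply, Pi.one_apply, smul_eq_mul, hβdef, hqdef]
    field_simp
    ring
  have hAv : A *ᵥ (z - cc • (1 : Fin n → ℝ) - β • u) = s - cc • (1 : Fin n → ℝ) - β • el := by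
    rw [Matrix.mulVec_sub, Matrix.mulVec_sub, Matrix.mulVec_smul, Matrix.mulVec_smul, hA1,
      hzdef, hudef, hcan' s, hcan' el]
  -- symmetry transfers
  have hKT : Kᵀ = K := by
    have hKE : K = 1 + ε • E := rfl
    rw [hKE, Matrix.transpose_add, Matrix.transpose_one, Matrix.transpose_smul, hEdiag,
      Matrix.diagonal_transpose]
  have hNT : Nᵀ = N := by
    rw [hNdef, Matrix.transpose_sub, Matrix.transpose_smul, Matrix.transpose_mul,
      Matrix.transpose_mul, hAinvT, hEdiag, Matrix.diagonal_transpose, ← hEdiag,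
      Matrix.mul_assoc]
  have hKdot : ∀ x y : Fin n → ℝ, x ⬝ᵥ (K *ᵥ y) = (K *ᵥ x) ⬝ᵥ y := by
    intro x y
    rw [Matrix.dotProduct_mulVec]
    conv_lhs => rw [← hKT]
    rw [Matrix.vecMul_transpose]
  have hNdot : ∀ x y : Fin n → ℝ, x ⬝ᵥ (N *ᵥ y) = (N *ᵥ x) ⬝ᵥ y := by
    intro x y
    rw [Matrix.dotProduct_mulVec]
    conv_lhs => rw [← hNT]
    rw [Matrix.vecMul_transpose]
  -- main computation
  have hL1A : L + 1 = A := by rw [hAdef, add_comm]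
  have hPDhat : PDhat = PD - 2 * β * z l + cc ^ 2 * n + 2 * cc * β + β ^ 2 * r := by
    have h0 : PDhat = sK ⬝ᵥ ((K * (L + K)⁻¹ * (L + 1) * (L + K)⁻¹ * K) *ᵥ sK) := rfl
    rw [h0, hMinv, hL1A]
    rw [← Matrix.mulVec_mulVec, ← Matrix.mulVec_mulVec, ← Matrix.mulVec_mulVec,
      ← Matrix.mulVec_mulVec]
    rw [hKdot, hNdot, hv, hAv]
    simp only [sub_dotProduct, dotProduct_sub, smul_dotProduct,
      dotProduct_smul, smul_eq_mul]
    rw [hzs, hz1, hzel, h1s, h11, h1el, hus, hu1, huel]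
    ring
  have hnne : (n : ℝ) ≠ 0 := Nat.cast_ne_zero.mpr hn.ne'
  have hccβ : cc = -β / n := by rw [hccdef, hc0, hβdef, hqdef]
  have hzFJ : zFJ l = z l := rfl
  have hrdef : r = (1 + L)⁻¹ l l := rfl
  have hmain : PDhat = PD - (1 / (n : ℝ)) * c0 ^ 2
      - ((2 * ε + ε ^ 2 * r) / (1 + ε * r) ^ 2) * (zFJ l) ^ 2 := by
    rw [hPDhat, hccβ, hzFJ, hc0, hβdef, hqdef]
    field_simp
    ring
  clear_value PDhat
  clear_value r
  clear_value sK
  clear_value c0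
  clear_value oneK
  clear_value PD
  clear_value zFJ
  refine ⟨hmain, ?_⟩
  rw [hmain]
  have h1 : 0 ≤ (1 / (n : ℝ)) * c0 ^ 2 := by positivity
  have h2 : 0 ≤ ((2 * ε + ε ^ 2 * r) / (1 + ε * r) ^ 2) * (zFJ l) ^ 2 := by
    apply mul_nonneg _ (sq_nonneg _)
    apply div_nonneg _ (sq_nonneg _)
    nlinarith
  linarith
end

section
/- Alternative-definition monotonicity and Lipschitz bound: Let L be a graph Laplacian and s ∈ R^n with ||s|| ≤ R. Define PD(α) = α·s̄^T(I+α^{-1}L)^{-1}s̄ with s̄ = s - ((s^T 1)/n)·1. Then for any 0 < α ≤ β, PD(α) ≤ PD(β) and PD(β) - PD(α) ≤ (β - α)R^2. -/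
/-!
By the continuous functional calculus, `γ (1 + γ⁻¹ L)⁻¹ = f(L, γ)` with
`f(x, γ) = γ / (1 + γ⁻¹ x)`, and the spectrum of `L` lies in `[0, ∞)`. There the scalar
inequalities `f(x, α) ≤ f(x, β) ≤ f(x, α) + (β - α)` hold, so they lift to the Loewner order
and then to the quadratic forms at `s̄`. Finally, centering does not increase the norm:
`‖s̄‖² = ‖s‖² - (sᵀ1)² / n ≤ R²`.
-/

open Matrix MatrixOrder

section Scalar

variable {α β x : ℝ}

lemma mul_inv_one_add_inv_mul_eq_sq_div (hα : α ≠ 0) :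
    α * (1 + α⁻¹ * x)⁻¹ = α ^ 2 / (α + x) := by
  field_simp

lemma mul_inv_one_add_inv_mul_le_of_le (hα : 0 < α) (hαβ : α ≤ β) (hx : 0 ≤ x) :
    α * (1 + α⁻¹ * x)⁻¹ ≤ β * (1 + β⁻¹ * x)⁻¹ := by
  have hβ := hα.trans_le hαβ
  rw [mul_inv_one_add_inv_mul_eq_sq_div hα.ne', mul_inv_one_add_inv_mul_eq_sq_div hβ.ne',
    div_le_div_iff₀ (by positivity) (by positivity)]
  nlinarith [mul_nonneg (mul_nonneg hα.le hβ.le) (sub_nonneg.2 hαβ),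
    mul_nonneg (mul_nonneg hx (sub_nonneg.2 hαβ)) (add_pos hα hβ).le]

lemma mul_inv_one_add_inv_mul_le_add_sub (hα : 0 < α) (hαβ : α ≤ β) (hx : 0 ≤ x) :
    β * (1 + β⁻¹ * x)⁻¹ ≤ α * (1 + α⁻¹ * x)⁻¹ + (β - α) := by
  have hβ := hα.trans_le hαβ
  rw [mul_inv_one_add_inv_mul_eq_sq_div hα.ne', mul_inv_one_add_inv_mul_eq_sq_div hβ.ne',
    div_add' _ _ _ (by positivity), div_le_div_iff₀ (by positivity) (by positivity)]
  nlinarith [mul_nonneg (mul_nonneg hx hx) (sub_nonneg.2 hαβ)]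

end Scalar

lemma dotProduct_self_sub_mean_smul_one_le {ι : Type*} [Fintype ι] (s : ι → ℝ) :
    let sb := s - ((s ⬝ᵥ 1) / Fintype.card ι) • (1 : ι → ℝ)
    sb ⬝ᵥ sb ≤ s ⬝ᵥ s := by
  intro sb
  have hexp : sb ⬝ᵥ sb = s ⬝ᵥ s - (s ⬝ᵥ 1) ^ 2 / Fintype.card ι := by
    rcases eq_or_ne (Fintype.card ι : ℝ) 0 with h | h
    · simp [sb, h]
    · simp only [sb, sub_dotProduct, dotProduct_sub, smul_dotProduct, dotProduct_smul,
        one_dotProduct_one, dotProduct_comm 1 s, smul_eq_mul]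
      field_simp
      ring
  rw [hexp]
  exact sub_le_self _ (by positivity)

lemma dotProduct_mulVec_le_of_le {n : Type*} [Fintype n] {A B : Matrix n n ℝ} (h : A ≤ B)
    (v : n → ℝ) :
    v ⬝ᵥ (A *ᵥ v) ≤ v ⬝ᵥ (B *ᵥ v) := by
  have := (le_iff.mp h).dotProduct_mulVec_nonneg v
  rwa [star_trivial, sub_mulVec, dotProduct_sub, sub_nonneg] at this

variable {n : Type*} [Fintype n] [DecidableEq n]

lemma Matrix.PosSemidef.cfc_mono {L : Matrix n n ℝ} (hL : L.PosSemidef) {f g : ℝ → ℝ}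
    (h : ∀ x, 0 ≤ x → f x ≤ g x) : cfc f L ≤ cfc g L :=
  _root_.cfc_mono (fun x hx ↦ h x (spectrum_nonneg_of_nonneg hL.nonneg hx))
    (L.finite_real_spectrum.continuousOn _) (L.finite_real_spectrum.continuousOn _)

lemma smul_inv_one_add_inv_smul_eq_cfc {L : Matrix n n ℝ} (hL : L.PosSemidef) {γ : ℝ}
    (hγ : 0 < γ) : γ • (1 + γ⁻¹ • L)⁻¹ = cfc (fun x ↦ γ * (1 + γ⁻¹ * x)⁻¹) L := by
  have hne : ∀ x ∈ spectrum ℝ L, 1 + γ⁻¹ * x ≠ 0 := fun x hx ↦ by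
    have := spectrum_nonneg_of_nonneg hL.nonneg hx
    positivity
  have hcont : ContinuousOn (fun x ↦ (1 + γ⁻¹ * x)⁻¹) (spectrum ℝ L) :=
    L.finite_real_spectrum.continuousOn _
  have hlin : cfc (fun x ↦ 1 + γ⁻¹ * x) L = 1 + γ⁻¹ • L := by
    refine (cfc_const_add 1 (fun x ↦ γ⁻¹ * x) L (ha := hL.1)).trans ?_
    rw [map_one, cfc_const_mul_id γ⁻¹ L hL.1]
  rw [cfc_const_mul _ _ _ hcont, cfc_inv _ _ hne, hlin, nonsing_inv_eq_ringInverse]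

noncomputable def scaledResolventForm (L : Matrix n n ℝ) (v : n → ℝ) (γ : ℝ) : ℝ :=
  γ * (v ⬝ᵥ ((1 + γ⁻¹ • L)⁻¹ *ᵥ v))

lemma scaledResolventForm_eq_cfc {L : Matrix n n ℝ} (hL : L.PosSemidef) (v : n → ℝ) {γ : ℝ}
    (hγ : 0 < γ) :
    scaledResolventForm L v γ = v ⬝ᵥ (cfc (fun x ↦ γ * (1 + γ⁻¹ * x)⁻¹) L *ᵥ v) := by
  rw [scaledResolventForm, ← smul_inv_one_add_inv_smul_eq_cfc hL hγ, smul_mulVec,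
    dotProduct_smul, smul_eq_mul]

lemma scaledResolventForm_mono {L : Matrix n n ℝ} (hL : L.PosSemidef) (v : n → ℝ) {α β : ℝ}
    (hα : 0 < α) (hαβ : α ≤ β) : scaledResolventForm L v α ≤ scaledResolventForm L v β := by
  rw [scaledResolventForm_eq_cfc hL v hα, scaledResolventForm_eq_cfc hL v (hα.trans_le hαβ)]
  exact dotProduct_mulVec_le_of_le
    (hL.cfc_mono fun x hx ↦ mul_inv_one_add_inv_mul_le_of_le hα hαβ hx) v

lemma scaledResolventForm_sub_le {L : Matrix n n ℝ} (hL : L.PosSemidef) (v : n → ℝ) {α β : ℝ}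
    (hα : 0 < α) (hαβ : α ≤ β) :
    scaledResolventForm L v β - scaledResolventForm L v α ≤ (β - α) * (v ⬝ᵥ v) := by
  have hle := (hL.cfc_mono fun x hx ↦ mul_inv_one_add_inv_mul_le_add_sub hα hαβ hx).trans_eq
    (cfc_add_const (β - α) (fun x ↦ α * (1 + α⁻¹ * x)⁻¹) L
      (L.finite_real_spectrum.continuousOn _) hL.1)
  rw [Algebra.algebraMap_eq_smul_one] at hle
  have := dotProduct_mulVec_le_of_le hle v
  rw [add_mulVec, smul_mulVec, one_mulVec, dotProduct_add, dotProduct_smul, smul_eq_mul,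
    ← scaledResolventForm_eq_cfc hL v hα,
    ← scaledResolventForm_eq_cfc hL v (hα.trans_le hαβ)] at this
  linarith

theorem stmt17_general {n : ℕ} (L : Matrix (Fin n) (Fin n) ℝ)
    (hL : L.PosSemidef)
    (s : Fin n → ℝ) (R : ℝ) (hs : Real.sqrt (s ⬝ᵥ s) ≤ R)
    (α β : ℝ) (hα : 0 < α) (hαβ : α ≤ β) :
    let sb := s - ((s ⬝ᵥ (1 : Fin n → ℝ)) / (n : ℝ)) • (1 : Fin n → ℝ)
    let PD : ℝ → ℝ := fun γ => γ * (sb ⬝ᵥ ((1 + γ⁻¹ • L)⁻¹ *ᵥ sb))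
    PD α ≤ PD β ∧ PD β - PD α ≤ (β - α) * R ^ 2 := by
  intro sb PD
  have hsb : sb ⬝ᵥ sb ≤ R ^ 2 := by
    have hcentered := dotProduct_self_sub_mean_smul_one_le s
    rw [Fintype.card_fin] at hcentered
    exact hcentered.trans ((Real.sqrt_le_left ((Real.sqrt_nonneg _).trans hs)).mp hs)
  refine ⟨scaledResolventForm_mono hL sb hα hαβ, ?_⟩
  calc PD β - PD α ≤ (β - α) * (sb ⬝ᵥ sb) := scaledResolventForm_sub_le hL sb hα hαβ
    _ ≤ (β - α) * R ^ 2 := mul_le_mul_of_nonneg_left hsb (sub_nonneg.mpr hαβ)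

theorem stmt17 {n : ℕ} (L : Matrix (Fin n) (Fin n) ℝ)
    (hL : L.PosSemidef) (hL1 : L *ᵥ 1 = 0)
    (s : Fin n → ℝ) (R : ℝ) (hs : Real.sqrt (s ⬝ᵥ s) ≤ R)
    (α β : ℝ) (hα : 0 < α) (hαβ : α ≤ β) :
    let sb := s - ((s ⬝ᵥ (1 : Fin n → ℝ)) / (n : ℝ)) • (1 : Fin n → ℝ)
    let PD : ℝ → ℝ := fun γ => γ * (sb ⬝ᵥ ((1 + γ⁻¹ • L)⁻¹ *ᵥ sb))
    PD α ≤ PD β ∧ PD β - PD α ≤ (β - α) * R ^ 2 :=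
  stmt17_general L hL s R hs α β hα hαβ
end
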